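/- arXiv:2309.11990 — 3 statements merged into one kernel-verified Lean document; each statement's English description precedes it below -/
import Mathlib

section
/- The set B₂ = ℝ \ A₂ is countable and scattered as a subset of H(A₂), yet the space H(A₂) is not σ-compact. (Hence the statement 'if ℝ \ A is countable and scattered in H(A) then H(A) is σ-compact' is false.) -/
open Set TopologicalSpace Topology

/-- The Hattori topology τ(A) on ℝ: generated by the Euclidean open sets together with
all sets [x, x+ε) with x ∈ ℝ \ A and ε > 0. -/
def hattori (A : Set ℝ) : TopologicalSpace ℝ :=
  TopologicalSpace.generateFrom
    ({s : Set ℝ | IsOpen s} ∪ {s : Set ℝ | ∃ x ∉ A, ∃ ε > 0, s = Set.Ico x (x + ε)})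

/-- A set `S` is scattered (w.r.t. a topology `t`) if every nonempty subset `T ⊆ S`
has a point isolated in `T` with the subspace topology. -/
def ScatteredIn {X : Type*} (t : TopologicalSpace X) (S : Set X) : Prop :=
  ∀ T ⊆ S, T.Nonempty → ∃ x ∈ T, ∃ U, IsOpen[t] U ∧ U ∩ T = {x}

/-- `B₂`: the set of right endpoints of the closed intervals appearing in the standard
middle-thirds construction of the Cantor set. -/
def B2 : Set ℝ :=
  {x | ∃ n : ℕ, ∃ c : ℕ → ℝ, (∀ i, c i = 0 ∨ c i = 2) ∧
    x = (∑ i ∈ Finset.range n, c i / 3 ^ (i + 1)) + 1 / 3 ^ n}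

/-- `A₂ = ℝ \ B₂`. -/
def A2 : Set ℝ := B2ᶜ

open Filter

/-!
Every point of `B₂` is `(E + 1) / 3ⁿ` for some `E` whose ternary digits are all `0` or `2`. Since
`E` and `E + 1` never both have this property, a point `x` of `B₂` of level `n` is the only point
of `B₂` in `[x, x + 3⁻ⁿ)`, which is open in `H(A₂)`; this gives countability and scatteredness.

Conversely every `x ∈ B₂` is a limit from the left of the points `x - 2 / 3^(m+1)` of `B₂`, whereas
a compact set of `H(A₂)`, which is also compact and hence closed in `ℝ`, cannot accumulate from the
left at a point of `B₂`. If `H(A₂)` were covered by countably many compact sets, Baire's theorem in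
the complete space `closure B₂` would make one of them contain a relative neighbourhood in
`closure B₂` of some point of `B₂`, a contradiction.
-/

theorem hattori_le (A : Set ℝ) : hattori A ≤ (inferInstance : TopologicalSpace ℝ) :=
  fun s hs => GenerateOpen.basic s (Or.inl hs)

section Hattori

variable {A : Set ℝ}

theorem isOpen_hattori_Ico {x : ℝ} (hx : x ∉ A) {ε : ℝ} (hε : 0 < ε) :
    IsOpen[hattori A] (Ico x (x + ε)) :=
  GenerateOpen.basic _ (Or.inr ⟨x, hx, ε, hε, rfl⟩)

theorem isCompact_of_isCompact_hattori {K : Set ℝ} (hK : @IsCompact ℝ (hattori A) K) :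
    IsCompact K := by
  simpa using @IsCompact.image ℝ ℝ (hattori A) _ K id hK (continuous_id_iff_le.2 (hattori_le A))

theorem disjoint_nhds_hattori_nhdsLT {x : ℝ} (hx : x ∉ A) :
    Disjoint (@nhds ℝ (hattori A) x) (𝓝[<] x) := by
  have hIco : Ico x (x + 1) ∈ @nhds ℝ (hattori A) x :=
    @IsOpen.mem_nhds ℝ (hattori A) _ _ (isOpen_hattori_Ico hx one_pos) ⟨le_rfl, by linarith⟩
  refine Filter.disjoint_of_disjoint_of_mem ?_ hIco self_mem_nhdsWithin
  exact (Iio_disjoint_Ici le_rfl).symm.mono_left Ico_subset_Ici_self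

/-- A cluster point in `K` of points approaching `x` from the left must be `x` itself, and
`[x, x + 1)` separates `x` from them. -/
theorem eventually_nhdsLT_notMem_of_isCompact_hattori {K : Set ℝ}
    (hK : @IsCompact ℝ (hattori A) K) {x : ℝ} (hx : x ∉ A) : ∀ᶠ y in 𝓝[<] x, y ∉ K := by
  by_contra h
  have hne : NeBot (𝓝[<] x ⊓ 𝓟 K) :=
    frequently_iff_neBot.1 ((not_eventually.1 h).mono fun _ => not_not.1)
  obtain ⟨p, -, hp⟩ := @IsCompact.exists_clusterPt ℝ (hattori A) K hK _ hne inf_le_right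
  have hpx : p = x := eq_of_nhds_neBot <| @NeBot.mono _ _ _ hp
    (inf_le_inf (nhds_mono (hattori_le A)) (inf_le_left.trans nhdsWithin_le_nhds))
  subst hpx
  exact hp.ne ((disjoint_nhds_hattori_nhdsLT hx).mono_right inf_le_left).eq_bot

end Hattori

theorem exists_eventually_mem_of_closure_subset_iUnion {X : Type*} [PseudoEMetricSpace X]
    [CompleteSpace X] {S : Set X} (hS : S.Nonempty) {K : ℕ → Set X} (hK : ∀ i, IsClosed (K i))
    (hcover : closure S ⊆ ⋃ i, K i) : ∃ i, ∃ x ∈ S, ∀ᶠ y in 𝓝 x, y ∈ closure S → y ∈ K i := by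
  have : CompleteSpace (closure S) := isClosed_closure.completeSpace_coe
  have : Nonempty (closure S) := (hS.mono subset_closure).to_subtype
  obtain ⟨i, z, hz⟩ := nonempty_interior_of_iUnion_of_closed
    (fun i => (hK i).preimage (continuous_subtype_val (p := (· ∈ closure S))))
    (iUnion_eq_univ_iff.2 fun z => (mem_iUnion.1 (hcover z.2) : ∃ i, (z : X) ∈ K i))
  obtain ⟨W, hW, hWK⟩ := (mem_nhds_subtype _ z _).1 (mem_interior_iff_mem_nhds.1 hz)
  obtain ⟨x, hxW, hxS⟩ := mem_closure_iff.1 z.2 _ isOpen_interior (mem_interior_iff_mem_nhds.2 hW)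
  refine ⟨i, x, hxS, ?_⟩
  filter_upwards [isOpen_interior.mem_nhds hxW] with y hy hyS
  exact hWK (show (⟨y, hyS⟩ : closure S) ∈ Subtype.val ⁻¹' W from interior_subset (s := W) hy)

def TernaryDigitsEven (n : ℕ) : Prop := ∀ k, n / 3 ^ k % 3 ≠ 1

namespace TernaryDigitsEven

theorem zero : TernaryDigitsEven 0 := by
  simp [TernaryDigitsEven]

theorem div_pow {n : ℕ} (hn : TernaryDigitsEven n) (k : ℕ) : TernaryDigitsEven (n / 3 ^ k) := by
  intro j
  rw [Nat.div_div_eq_div_mul, ← pow_add]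
  exact hn (k + j)

theorem three_mul_add {n e : ℕ} (hn : TernaryDigitsEven n) (he : e = 0 ∨ e = 2) :
    TernaryDigitsEven (3 * n + e) := by
  rintro (_ | k)
  · omega
  · have : (3 * n + e) / 3 ^ (k + 1) = n / 3 ^ k := by
      rw [pow_succ', ← Nat.div_div_eq_div_mul]
      congr 1
      omega
    rw [this]
    exact hn k

/-- Adding one to a number with ternary digits `0, 2` carries until it creates a digit `1`. -/
theorem not_succ {n : ℕ} (hn : TernaryDigitsEven n) : ¬ TernaryDigitsEven (n + 1) := by
  induction n using Nat.strong_induction_on with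
  | _ n ih =>
    intro hn1
    have h0 := hn 0
    have h1 := hn1 0
    simp only [pow_zero, Nat.div_one] at h0 h1
    have hdiv : (n + 1) / 3 = n / 3 + 1 := by omega
    have hn3 : TernaryDigitsEven (n / 3) := by simpa using hn.div_pow 1
    have hn31 : TernaryDigitsEven (n / 3 + 1) := by simpa [hdiv] using hn1.div_pow 1
    exact ih (n / 3) (by omega) hn3 hn31

theorem add_two_mul_pow_le {m n k : ℕ} (hm : TernaryDigitsEven m) (hn : TernaryDigitsEven n)
    (h : (m + 1) * 3 ^ k < n + 1) : (m + 2) * 3 ^ k ≤ n + 1 := by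
  by_contra! h'
  have hpos : 0 < 3 ^ k := by positivity
  have hdiv : n / 3 ^ k = m + 1 := by
    apply le_antisymm
    · exact Nat.lt_succ_iff.mp (Nat.div_lt_of_lt_mul (by linarith))
    · exact (Nat.le_div_iff_mul_le hpos).mpr (by linarith)
  exact hm.not_succ (hdiv ▸ hn.div_pow k)

theorem add_two_mul_pow_le_mul_pow {m n a b : ℕ} (hm : TernaryDigitsEven m)
    (hn : TernaryDigitsEven n)
    (h : (m + 1) * 3 ^ b < (n + 1) * 3 ^ a) : (m + 2) * 3 ^ b ≤ (n + 1) * 3 ^ a := by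
  rcases le_total a b with hab | hba
  · obtain ⟨k, rfl⟩ := Nat.exists_eq_add_of_le hab
    rw [pow_add, ← mul_assoc, mul_right_comm] at h ⊢
    exact Nat.mul_le_mul_right _ (hm.add_two_mul_pow_le hn (Nat.lt_of_mul_lt_mul_right h))
  · obtain ⟨k, rfl⟩ := Nat.exists_eq_add_of_le hba
    rw [pow_add, ← mul_assoc, mul_right_comm (n + 1)] at h ⊢
    exact Nat.mul_le_mul_right _ (Nat.lt_of_mul_lt_mul_right h)

end TernaryDigitsEven

noncomputable def cantorRightEnd (c : ℕ → ℝ) (n : ℕ) : ℝ :=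
  (∑ i ∈ Finset.range n, c i / 3 ^ (i + 1)) + 1 / 3 ^ n

theorem mem_B2 {x : ℝ} :
    x ∈ B2 ↔ ∃ n, ∃ c : ℕ → ℝ, (∀ i, c i = 0 ∨ c i = 2) ∧ x = cantorRightEnd c n :=
  Iff.rfl

theorem cantorRightEnd_succ (c : ℕ → ℝ) (n : ℕ) :
    cantorRightEnd c (n + 1) = cantorRightEnd c n + (c n - 2) / 3 ^ (n + 1) := by
  rw [cantorRightEnd, cantorRightEnd, Finset.sum_range_succ, pow_succ]
  field_simp
  ring

theorem cantorRightEnd_update (c : ℕ → ℝ) (n : ℕ) (d : ℝ) :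
    cantorRightEnd (Function.update c n d) (n + 1) =
      cantorRightEnd c n + (d - 2) / 3 ^ (n + 1) := by
  have hsum : ∀ i ∈ Finset.range n, Function.update c n d i / 3 ^ (i + 1) = c i / 3 ^ (i + 1) :=
    fun i hi => by rw [Function.update_of_ne (Finset.mem_range.mp hi).ne]
  rw [cantorRightEnd_succ, cantorRightEnd, cantorRightEnd, Finset.sum_congr rfl hsum,
    Function.update_self]

theorem exists_cantorRightEnd_eq_of_le {c : ℕ → ℝ} (hc : ∀ i, c i = 0 ∨ c i = 2) {n m : ℕ}
    (hnm : n ≤ m) :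
    ∃ d : ℕ → ℝ, (∀ i, d i = 0 ∨ d i = 2) ∧ cantorRightEnd c n = cantorRightEnd d m := by
  induction m, hnm using Nat.le_induction with
  | base => exact ⟨c, hc, rfl⟩
  | succ m _ ih =>
    obtain ⟨d, hd, hcd⟩ := ih
    refine ⟨Function.update d m 2, ?_, by rw [cantorRightEnd_update, hcd]; ring⟩
    exact (Function.forall_update_iff d (p := fun _ y => y = 0 ∨ y = 2)).2
      ⟨.inr rfl, fun i _ => hd i⟩

theorem cantorRightEnd_sub_mem_B2 {c : ℕ → ℝ} (hc : ∀ i, c i = 0 ∨ c i = 2) {n m : ℕ}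
    (hnm : n ≤ m) :
    cantorRightEnd c n - 2 / 3 ^ (m + 1) ∈ B2 := by
  obtain ⟨d, hd, hcd⟩ := exists_cantorRightEnd_eq_of_le hc hnm
  refine mem_B2.2 ⟨m + 1, Function.update d m 0, ?_, by rw [cantorRightEnd_update, hcd]; ring⟩
  exact (Function.forall_update_iff d (p := fun _ y => y = 0 ∨ y = 2)).2
    ⟨.inl rfl, fun i _ => hd i⟩

theorem exists_cantorRightEnd_eq_div {c : ℕ → ℝ} (hc : ∀ i, c i = 0 ∨ c i = 2) (n : ℕ) :
    ∃ E : ℕ, TernaryDigitsEven E ∧ cantorRightEnd c n = (E + 1) / 3 ^ n := by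
  induction n with
  | zero => exact ⟨0, .zero, by simp [cantorRightEnd]⟩
  | succ n ih =>
    obtain ⟨E, hE, hcE⟩ := ih
    obtain ⟨e, he, hce⟩ : ∃ e : ℕ, (e = 0 ∨ e = 2) ∧ c n = e := by
      rcases hc n with h | h
      exacts [⟨0, by simp, by simp [h]⟩, ⟨2, by simp, by simp [h]⟩]
    refine ⟨3 * E + e, hE.three_mul_add he, ?_⟩
    rw [cantorRightEnd_succ, hcE, hce, pow_succ]
    push_cast
    field_simp
    ring

theorem one_mem_B2 : (1 : ℝ) ∈ B2 :=
  ⟨0, fun _ => 0, fun _ => .inl rfl, by simp⟩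

theorem B2_countable : B2.Countable := by
  refine (countable_range fun p : ℕ × ℕ => ((p.2 : ℝ) + 1) / 3 ^ p.1).mono ?_
  rintro x ⟨n, c, hc, rfl⟩
  obtain ⟨E, -, hE⟩ := exists_cantorRightEnd_eq_div hc n
  exact ⟨(n, E), hE.symm⟩

theorem add_inv_pow_le_of_lt {c d : ℕ → ℝ} (hc : ∀ i, c i = 0 ∨ c i = 2)
    (hd : ∀ i, d i = 0 ∨ d i = 2) {n m : ℕ} (h : cantorRightEnd c n < cantorRightEnd d m) :
    cantorRightEnd c n + 1 / 3 ^ n ≤ cantorRightEnd d m := by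
  obtain ⟨E, hE, hcE⟩ := exists_cantorRightEnd_eq_div hc n
  obtain ⟨F, hF, hdF⟩ := exists_cantorRightEnd_eq_div hd m
  rw [hcE, hdF] at h ⊢
  rw [div_lt_div_iff₀ (by positivity) (by positivity)] at h
  rw [← add_div, div_le_div_iff₀ (by positivity) (by positivity)]
  exact_mod_cast hE.add_two_mul_pow_le_mul_pow hF (by exact_mod_cast h)

theorem exists_Ico_inter_B2_eq_singleton {x : ℝ} (hx : x ∈ B2) :
    ∃ ε > 0, Ico x (x + ε) ∩ B2 = {x} := by
  obtain ⟨n, c, hc, rfl⟩ := hx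
  refine ⟨1 / 3 ^ n, by positivity, subset_antisymm ?_ fun y hy => ?_⟩
  · rintro y ⟨⟨hxy, hy⟩, m, d, hd, rfl⟩
    by_contra hne
    exact (add_inv_pow_le_of_lt hc hd (lt_of_le_of_ne hxy (Ne.symm hne))).not_gt hy
  · rw [mem_singleton_iff.mp hy]
    exact ⟨⟨le_rfl, by simp [pow_pos]⟩, n, c, hc, rfl⟩

theorem frequently_nhdsLT_mem_B2 {x : ℝ} (hx : x ∈ B2) : ∃ᶠ y in 𝓝[<] x, y ∈ B2 := by
  obtain ⟨n, c, hc, rfl⟩ := hx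
  have hlim : Tendsto (fun m : ℕ => (2 : ℝ) / 3 ^ (m + 1)) atTop (𝓝 0) :=
    tendsto_const_nhds.div_atTop
      ((tendsto_pow_atTop_atTop_of_one_lt (by norm_num)).comp (tendsto_add_atTop_nat 1))
  have hseq : Tendsto (fun m : ℕ => cantorRightEnd c n - 2 / 3 ^ (m + 1)) atTop
      (𝓝[<] cantorRightEnd c n) := by
    refine tendsto_nhdsWithin_iff.2 ⟨by simpa using tendsto_const_nhds.sub hlim, ?_⟩
    exact Eventually.of_forall fun m => sub_lt_self _ (by positivity : (0 : ℝ) < 2 / 3 ^ (m + 1))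
  exact hseq.frequently
    ((eventually_ge_atTop n).mono fun m hm => cantorRightEnd_sub_mem_B2 hc hm).frequently

theorem not_sigmaCompactSpace_hattori_A2 : ¬ @SigmaCompactSpace ℝ (hattori A2) := by
  intro h
  obtain ⟨K, hK, hKcover⟩ := @SigmaCompactSpace.isSigmaCompact_univ ℝ (hattori A2) h
  obtain ⟨i, x, hx, hxK⟩ := exists_eventually_mem_of_closure_subset_iUnion ⟨1, one_mem_B2⟩
    (fun i => (isCompact_of_isCompact_hattori (hK i)).isClosed) (by simp [hKcover])
  have hnotK := eventually_nhdsLT_notMem_of_isCompact_hattori (hK i) (not_not.2 hx)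
  obtain ⟨y, hyB, hyK, hynotK⟩ := ((frequently_nhdsLT_mem_B2 hx).and_eventually
    ((hxK.filter_mono nhdsWithin_le_nhds).and hnotK)).exists
  exact hynotK (hyK (subset_closure hyB))

theorem scatteredIn_hattori_B2 : ScatteredIn (hattori A2) B2 := by
  intro T hT ⟨x, hxT⟩
  obtain ⟨ε, hε, hIco⟩ := exists_Ico_inter_B2_eq_singleton (hT hxT)
  refine ⟨x, hxT, Ico x (x + ε), isOpen_hattori_Ico (not_not.2 (hT hxT)) hε, ?_⟩
  exact subset_antisymm (hIco ▸ inter_subset_inter_right _ hT)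
    (singleton_subset_iff.2 ⟨⟨le_rfl, by linarith⟩, hxT⟩)

/-- B₂ = ℝ \ A₂ is countable and scattered in H(A₂), yet H(A₂) is not σ-compact. -/
theorem B2_countable_scattered_but_not_sigmaCompact :
    B2.Countable ∧ ScatteredIn (hattori A2) B2 ∧
    ¬ @SigmaCompactSpace ℝ (hattori A2) :=
  ⟨B2_countable, scatteredIn_hattori_B2, not_sigmaCompactSpace_hattori_A2⟩
end

section
/- Let A ⊆ ℝ be scattered as a subset of ℝ with the Euclidean topology. Then a subset Y of the space H(A) is σ-compact (as a subspace of H(A)) if and only if Y is countable. -/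
open Set TopologicalSpace Topology

lemma hattori_of_isOpen (A : Set ℝ) {s : Set ℝ} (hs : IsOpen s) : IsOpen[hattori A] s :=
  TopologicalSpace.isOpen_generateFrom_of_mem (Or.inl hs)

lemma hattori_Iio (A : Set ℝ) (y : ℝ) : IsOpen[hattori A] (Iio y) :=
  hattori_of_isOpen A isOpen_Iio

lemma hattori_Ici {A : Set ℝ} {x : ℝ} (hx : x ∉ A) : IsOpen[hattori A] (Ici x) := by
  have h : Ici x = ⋃ n : ℕ, Ico x (x + (n + 1)) := by
    ext y
    simp only [mem_Ici, mem_iUnion, mem_Ico]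
    constructor
    · intro hy
      obtain ⟨n, hn⟩ := exists_nat_gt (y - x)
      exact ⟨n, hy, by linarith⟩
    · rintro ⟨n, h1, _⟩; exact h1
  rw [h]
  letI := hattori A
  exact isOpen_iUnion fun n =>
    TopologicalSpace.isOpen_generateFrom_of_mem
      (Or.inr ⟨x, hx, (n : ℝ) + 1, by positivity, rfl⟩)

lemma countable_of_scatteredIn {A : Set ℝ}
    (hA : ScatteredIn (inferInstance : TopologicalSpace ℝ) A) : A.Countable := by
  classical
  set C : Set ℝ := ⋃ (p : ℚ) (q : ℚ),
    if (Ioo (p : ℝ) q ∩ A).Countable then Ioo (p : ℝ) q ∩ A else ∅ with hC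
  have hCc : C.Countable := by
    refine Set.countable_iUnion fun p => Set.countable_iUnion fun q => ?_
    split_ifs with h
    · exact h
    · exact countable_empty
  have hsub : A ⊆ C := by
    by_contra hn
    rw [not_subset] at hn
    obtain ⟨z, hzA, hzC⟩ := hn
    obtain ⟨x, hxT, U, hU, hUT⟩ := hA (A \ C) diff_subset ⟨z, hzA, hzC⟩
    have hxU : x ∈ U := by
      have hx : x ∈ U ∩ (A \ C) := by rw [hUT]; exact rfl
      exact hx.1
    obtain ⟨ε, hε, hball⟩ := Metric.isOpen_iff.mp hU x hxU
    obtain ⟨p, hp1, hp2⟩ := exists_rat_btwn (show x - ε < x by linarith)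
    obtain ⟨q, hq1, hq2⟩ := exists_rat_btwn (show x < x + ε by linarith)
    have hIoosub : Ioo (p : ℝ) q ⊆ U := by
      intro w hw
      apply hball
      rw [Real.ball_eq_Ioo]
      exact ⟨by linarith [hw.1], by linarith [hw.2]⟩
    have hcount : (Ioo (p : ℝ) q ∩ A).Countable := by
      have hsub2 : Ioo (p : ℝ) q ∩ A ⊆ insert x C := by
        rintro w ⟨hw1, hw2⟩
        by_cases hwC : w ∈ C
        · exact Or.inr hwC
        · have hw3 : w ∈ U ∩ (A \ C) := ⟨hIoosub hw1, hw2, hwC⟩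
          rw [hUT] at hw3
          exact Or.inl hw3
      exact (hCc.insert x).mono hsub2
    have hxC : x ∈ C := by
      rw [hC]
      refine mem_iUnion.mpr ⟨p, mem_iUnion.mpr ⟨q, ?_⟩⟩
      rw [if_pos hcount]
      exact ⟨⟨hp2, hq1⟩, hxT.1⟩
    exact hxT.2 hxC
  exact hCc.mono hsub

lemma countable_of_hattori_compact {A : Set ℝ} (hAc : A.Countable) {K : Set ℝ}
    (hK : @IsCompact ℝ (hattori A) K) : K.Countable := by
  have key : ∀ x : ℝ, ∃ q : ℚ, x ∈ K \ A → (q : ℝ) < x ∧ Ioo (q : ℝ) x ∩ K = ∅ := by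
    intro x
    by_cases hx : x ∈ K \ A
    swap
    · exact ⟨0, fun h => absurd h hx⟩
    letI := hattori A
    set U : Iio x → Set ℝ := fun y => Iio (y : ℝ) ∪ Ici x with hUdef
    have hUo : ∀ y, IsOpen (U y) := fun y =>
      (hattori_Iio A _).union (hattori_Ici hx.2)
    have hcov : K ⊆ ⋃ y, U y := by
      intro z _
      rcases lt_or_ge z x with h | h
      · refine mem_iUnion.mpr ⟨⟨(z + x) / 2, ?_⟩, Or.inl ?_⟩
        · simp only [mem_Iio]; linarith
        · simp only [U, mem_Iio]; linarith
      · exact mem_iUnion.mpr ⟨⟨x - 1, by simp only [mem_Iio]; linarith⟩, Or.inr h⟩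
    obtain ⟨t, ht⟩ := hK.elim_finite_subcover U hUo hcov
    rcases t.eq_empty_or_nonempty with rfl | htne
    · obtain ⟨q, hq⟩ := exists_rat_lt x
      refine ⟨q, fun _ => ⟨hq, ?_⟩⟩
      have hKe : K ⊆ ∅ := by simpa using ht
      rw [eq_empty_iff_forall_notMem]
      rintro w ⟨_, hwK⟩
      exact hKe hwK
    · set c : ℝ := t.sup' htne (fun y => (y : ℝ)) with hc
      have hcx : c < x := by
        rw [hc, Finset.sup'_lt_iff]
        exact fun y _ => y.2
      obtain ⟨q, hq1, hq2⟩ := exists_rat_btwn hcx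
      refine ⟨q, fun _ => ⟨hq2, ?_⟩⟩
      rw [eq_empty_iff_forall_notMem]
      rintro w ⟨⟨hw1, hw2⟩, hwK⟩
      obtain ⟨y, hyt, hyU⟩ := mem_iUnion₂.mp (ht hwK)
      rcases hyU with h | h
      · have hyc : (y : ℝ) ≤ c := Finset.le_sup' (fun y : Iio x => (y : ℝ)) hyt
        have hwc : w < c := lt_of_lt_of_le h hyc
        linarith
      · exact absurd h (by simp only [mem_Ici]; push_neg; linarith)
  choose f hf using key
  have hKA : (K \ A).Countable := by
    have hsub : K \ A ⊆ ⋃ q : ℚ, (K \ A) ∩ f ⁻¹' {q} := by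
      intro x hx
      exact mem_iUnion.mpr ⟨f x, hx, rfl⟩
    refine (Set.countable_iUnion fun q => ?_).mono hsub
    refine Set.Subsingleton.countable ?_
    rintro a ⟨ha, hfa⟩ b ⟨hb, hfb⟩
    by_contra hab
    have hfab : f a = f b := by
      have h1 : f a = q := hfa
      have h2 : f b = q := hfb
      rw [h1, h2]
    rcases lt_or_gt_of_ne hab with h | h
    · have hb' := hf b hb
      have ha' := hf a ha
      have hmem : a ∈ Ioo ((f b : ℝ)) b ∩ K := by
        refine ⟨⟨?_, h⟩, ha.1⟩
        rw [← hfab]; exact ha'.1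
      rw [hb'.2] at hmem
      exact hmem
    · have ha' := hf a ha
      have hb' := hf b hb
      have hmem : b ∈ Ioo ((f a : ℝ)) a ∩ K := by
        refine ⟨⟨?_, h⟩, hb.1⟩
        rw [hfab]; exact hb'.1
      rw [ha'.2] at hmem
      exact hmem
  have hKeq : K = (K ∩ A) ∪ (K \ A) := by
    ext w; by_cases hw : w ∈ A <;> simp [hw]
  rw [hKeq]
  exact (hAc.mono inter_subset_right).union hKA

/-- If A is scattered in the Euclidean real line, then a subset Y of H(A) is σ-compact
iff it is countable. -/
theorem isSigmaCompact_iff_countable_of_scattered (A : Set ℝ)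
    (hA : ScatteredIn (inferInstance : TopologicalSpace ℝ) A) (Y : Set ℝ) :
    @IsSigmaCompact ℝ (hattori A) Y ↔ Y.Countable := by
  constructor
  · rintro ⟨K, hKc, hKU⟩
    have hAc := countable_of_scatteredIn hA
    rw [← hKU]
    exact Set.countable_iUnion fun n => countable_of_hattori_compact hAc (hKc n)
  · intro hY
    letI := hattori A
    rcases Y.eq_empty_or_nonempty with rfl | hne
    · exact ⟨fun _ => ∅, fun _ => isCompact_empty, by simp⟩
    · obtain ⟨f, rfl⟩ := Set.Countable.exists_eq_range hY hne
      refine ⟨fun n => {f n}, fun n => isCompact_singleton, ?_⟩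
      ext w; simp [eq_comm]
end

section
/- Let A ⊆ ℝ be such that ℝ \ A is countable and dense in ℝ with the Euclidean topology. Then a subset Y of the space H(A) is σ-compact (as a subspace of H(A)) if and only if Y with the subspace topology from H(A) is homeomorphic to some F_σ-subset of the standard middle-thirds Cantor set C with the Euclidean topology. -/
open Set TopologicalSpace Topology

/-!
When `ℝ \ A` is countable and dense, the intervals `[q, r)` with `q, r ∉ A` form a countable
basis of `H(A)` consisting of clopen sets (`q ∉ A` makes `[q, r)` open, `r ∉ A` makes `[r, ∞)`
open). Their indicator functions therefore embed `H(A)` into `2^ℕ ≅ C`. Along an embedding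
into `C`, a set is σ-compact iff its image is, and in the compact Hausdorff space `C` the
σ-compact sets are exactly the `F_σ` sets.
-/

section General

variable {X Z : Type*} [TopologicalSpace X] [TopologicalSpace Z]

theorem Dense.exists_Ico_subset_of_mem_nhds {α : Type*} [LinearOrder α] [TopologicalSpace α]
    [OrderTopology α] [DenselyOrdered α] [NoMinOrder α] [NoMaxOrder α] {D : Set α}
    (hD : Dense D) {U : Set α} {x : α} (hU : U ∈ 𝓝 x) :
    ∃ q ∈ D, ∃ r ∈ D, x ∈ Ico q r ∧ Ico q r ⊆ U := by
  obtain ⟨l, u, ⟨hlx, hxu⟩, hsub⟩ := mem_nhds_iff_exists_Ioo_subset.1 hU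
  obtain ⟨q, hqD, hlq, hqx⟩ := hD.exists_between hlx
  obtain ⟨r, hrD, hxr, hru⟩ := hD.exists_between hxu
  exact ⟨q, hqD, r, hrD, ⟨hqx.le, hxr⟩,
    (Ico_subset_Ioo_left hlq).trans ((Ioo_subset_Ioo_right hru.le).trans hsub)⟩

theorem TopologicalSpace.IsTopologicalBasis.isEmbedding_boolIndicator [T0Space X] {ι : Type*}
    {B : ι → Set X} (hB : IsTopologicalBasis (range B)) (hB_clopen : ∀ i, IsClopen (B i)) :
    IsEmbedding fun x i ↦ (B i).boolIndicator x := by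
  refine IsInducing.isEmbedding ⟨le_antisymm ?_ ?_⟩
  · exact continuous_iff_le_induced.1 <|
      continuous_pi fun i ↦ (continuous_boolIndicator_iff_isClopen _).2 (hB_clopen i)
  · rw [hB.eq_generateFrom]
    refine le_generateFrom ?_
    rintro _ ⟨i, rfl⟩
    have hB_eq : B i = (fun x i ↦ (B i).boolIndicator x) ⁻¹' ((fun p ↦ p i) ⁻¹' {true}) := by
      ext x; exact (B i).mem_iff_boolIndicator x
    rw [hB_eq]
    exact isOpen_induced ((isOpen_discrete {true}).preimage (continuous_apply i))

theorem TopologicalSpace.IsTopologicalBasis.exists_isEmbedding_cantorSet [T0Space X]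
    {B : ℕ → Set X} (hB : IsTopologicalBasis (range B)) (hB_clopen : ∀ n, IsClopen (B n)) :
    ∃ e : X → cantorSet, IsEmbedding e :=
  ⟨_, cantorSetHomeomorphNatToBool.symm.isEmbedding.comp (hB.isEmbedding_boolIndicator hB_clopen)⟩

theorem isSigmaCompact_iff_exists_iUnion_isClosed [CompactSpace X] [T2Space X] {s : Set X} :
    IsSigmaCompact s ↔ ∃ F : ℕ → Set X, (∀ n, IsClosed (F n)) ∧ s = ⋃ n, F n :=
  ⟨fun ⟨K, hK, hs⟩ ↦ ⟨K, fun n ↦ (hK n).isClosed, hs.symm⟩,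
    fun ⟨F, hF, hs⟩ ↦ ⟨F, fun n ↦ (hF n).isCompact, hs.symm⟩⟩

theorem Topology.IsEmbedding.isSigmaCompact_iff_exists_homeomorph {e : X → Z}
    (he : IsEmbedding e) {s : Set X} :
    IsSigmaCompact s ↔ ∃ S : Set Z, IsSigmaCompact S ∧ Nonempty (s ≃ₜ S) := by
  refine ⟨fun hs ↦ ⟨e '' s, he.isSigmaCompact_iff.1 hs, ⟨he.homeomorphImage s⟩⟩, ?_⟩
  rintro ⟨S, hS, ⟨h⟩⟩
  have : SigmaCompactSpace S := isSigmaCompact_iff_sigmaCompactSpace.1 hS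
  rw [isSigmaCompact_iff_isSigmaCompact_univ, ← h.symm.range_coe]
  exact isSigmaCompact_range h.symm.continuous

theorem Topology.IsEmbedding.isSigmaCompact_iff_exists_homeomorph_iUnion_isClosed
    [CompactSpace Z] [T2Space Z] {e : X → Z} (he : IsEmbedding e) {s : Set X} :
    IsSigmaCompact s ↔ ∃ S : Set Z, (∃ F : ℕ → Set Z, (∀ n, IsClosed (F n)) ∧ S = ⋃ n, F n) ∧
      Nonempty (s ≃ₜ S) := by
  simp_rw [he.isSigmaCompact_iff_exists_homeomorph, isSigmaCompact_iff_exists_iUnion_isClosed]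

end General

section Hattori

variable {A : Set ℝ}

theorem isOpen_hattori_of_isOpen {U : Set ℝ} (hU : IsOpen U) : IsOpen[hattori A] U :=
  isOpen_generateFrom_of_mem (Or.inl hU)

theorem isOpen_hattori_Ici {q : ℝ} (hq : q ∉ A) : IsOpen[hattori A] (Ici q) := by
  have hIci : Ici q = Ico q (q + 1) ∪ Ioi q := by
    ext x
    simp only [mem_Ici, mem_union, mem_Ico, mem_Ioi]
    grind
  rw [hIci]
  exact @IsOpen.union ℝ _ _ (hattori A)
    (isOpen_generateFrom_of_mem (Or.inr ⟨q, hq, 1, one_pos, rfl⟩))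
    (isOpen_hattori_of_isOpen isOpen_Ioi)

theorem isClopen_hattori_Ico {q r : ℝ} (hq : q ∉ A) (hr : r ∉ A) :
    @IsClopen ℝ (hattori A) (Ico q r) := by
  have hcompl : (Ico q r)ᶜ = Iio q ∪ Ici r := by ext; simp [imp_iff_not_or]
  refine ⟨?_, ?_⟩
  · rw [← @isOpen_compl_iff ℝ _ (hattori A), hcompl]
    exact @IsOpen.union ℝ _ _ (hattori A) (isOpen_hattori_of_isOpen isOpen_Iio)
      (isOpen_hattori_Ici hr)
  · rw [← Ici_inter_Iio]
    exact @IsOpen.inter ℝ (hattori A) _ _ (isOpen_hattori_Ici hq)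
      (isOpen_hattori_of_isOpen isOpen_Iio)

theorem t2Space_hattori : @T2Space ℝ (hattori A) :=
  t2Space_antitone (fun _ hU ↦ isOpen_hattori_of_isOpen hU) inferInstance

theorem hattori_eq_generateFrom_Ico (hA : Dense Aᶜ) :
    hattori A = generateFrom (image2 Ico Aᶜ Aᶜ) := by
  refine le_antisymm ?_ (le_generateFrom ?_)
  · refine le_generateFrom ?_
    rintro _ ⟨q, hq, r, hr, rfl⟩
    exact (isClopen_hattori_Ico hq hr).2
  · rintro s (hs | ⟨x, hx, ε, -, rfl⟩) <;>
      refine (@isOpen_iff_forall_mem_open ℝ (generateFrom _) _).2 fun y hy ↦ ?_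
    · obtain ⟨q, hq, r, hr, hyqr, hsub⟩ :=
        hA.exists_Ico_subset_of_mem_nhds ((show IsOpen s from hs).mem_nhds hy)
      exact ⟨_, hsub, isOpen_generateFrom_of_mem ⟨q, hq, r, hr, rfl⟩, hyqr⟩
    · obtain ⟨r, hr, hyr, hrx⟩ := hA.exists_between hy.2
      exact ⟨Ico x r, Ico_subset_Ico_right hrx.le,
        isOpen_generateFrom_of_mem ⟨x, hx, r, hr, rfl⟩, hy.1, hyr⟩

theorem isTopologicalBasis_hattori (hA : Dense Aᶜ) :
    @IsTopologicalBasis ℝ (hattori A) (image2 Ico Aᶜ Aᶜ) := by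
  refine @IsTopologicalBasis.mk ℝ (hattori A) _ ?_ ?_ (hattori_eq_generateFrom_Ico hA)
  · rintro _ ⟨q, hq, r, hr, rfl⟩ _ ⟨q', hq', r', hr', rfl⟩ x hx
    rw [Ico_inter_Ico] at hx ⊢
    exact ⟨_, ⟨_, max_rec' (· ∉ A) hq hq', _, min_rec' (· ∉ A) hr hr', rfl⟩, hx, subset_rfl⟩
  · refine eq_univ_of_forall fun x ↦ ?_
    obtain ⟨q, hq, r, hr, hx, -⟩ :=
      hA.exists_Ico_subset_of_mem_nhds (Filter.univ_mem (f := 𝓝 x))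
    exact ⟨_, ⟨q, hq, r, hr, rfl⟩, hx⟩

theorem exists_isEmbedding_hattori_cantorSet (hcount : Aᶜ.Countable) (hA : Dense Aᶜ) :
    ∃ e : ℝ → cantorSet, @IsEmbedding ℝ cantorSet (hattori A) _ e := by
  obtain ⟨B, hB⟩ := (hcount.image2 hcount Ico).exists_eq_range <|
    let ⟨q, hq⟩ := hA.nonempty; ⟨_, mem_image2_of_mem hq hq⟩
  have hB_clopen (n : ℕ) : @IsClopen ℝ (hattori A) (B n) := by
    obtain ⟨q, hq, r, hr, hqr⟩ : B n ∈ image2 Ico Aᶜ Aᶜ := hB ▸ mem_range_self n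
    exact hqr ▸ isClopen_hattori_Ico hq hr
  let := hattori A
  have := t2Space_hattori (A := A)
  exact (hB ▸ isTopologicalBasis_hattori hA).exists_isEmbedding_cantorSet hB_clopen

end Hattori

/-- If ℝ \ A is countable and dense in the Euclidean real line, then a subset Y of H(A)
is σ-compact iff Y (with the subspace topology from H(A)) is homeomorphic to an
F_σ-subset of the Cantor set with the Euclidean topology. -/
theorem isSigmaCompact_iff_homeomorphic_Fsigma_of_cantorSet (A : Set ℝ)
    (hcount : (Aᶜ).Countable) (hdense : Dense (Aᶜ)) (Y : Set ℝ) :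
    @IsSigmaCompact ℝ (hattori A) Y ↔
      ∃ S : Set ↥cantorSet,
        (∃ F : ℕ → Set ↥cantorSet, (∀ n, IsClosed (F n)) ∧ S = ⋃ n, F n) ∧
        Nonempty (@Homeomorph ↥Y ↥S
          (TopologicalSpace.induced ((↑) : Y → ℝ) (hattori A)) inferInstance) := by
  have : CompactSpace cantorSet := isCompact_iff_compactSpace.1 isCompact_cantorSet
  obtain ⟨e, he⟩ := exists_isEmbedding_hattori_cantorSet hcount hdense
  exact @IsEmbedding.isSigmaCompact_iff_exists_homeomorph_iUnion_isClosed ℝ cantorSet (hattori A)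
    _ _ _ e he Y
end
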